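/- Squeeze law for statistical uo-convergence: if x_n ≤ y_n ≤ z_n for all n in a Riesz space E, and both x_n →^{st-uo} x and z_n →^{st-uo} x, then y_n →^{st-uo} x. -/

import Mathlib

open scoped Classical

/-- `K ⊆ ℕ` has natural density `a`. -/
def NatDensity (K : Set ℕ) (a : ℝ) : Prop :=
  Filter.Tendsto (fun n => (((Finset.range n).filter (fun k => k ∈ K)).card : ℝ) / n)
    Filter.atTop (nhds a)

variable {E : Type*} [Lattice E] [AddCommGroup E]
  [CovariantClass E E (· + ·) (· ≤ ·)] [Module ℝ E] [PosSMulMono ℝ E]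

/-- `p` is statistically monotone decreasing to `0`: it decreases along a set of
density one and its infimum over that set is `0`. -/
def StatDecrZero (p : ℕ → E) : Prop :=
  ∃ K : Set ℕ, NatDensity K 1 ∧ (∀ j ∈ K, ∀ k ∈ K, j ≤ k → p k ≤ p j) ∧ IsGLB (p '' K) 0

/-- `x` statistically order converges to `l`. -/
def StatOrderConv (x : ℕ → E) (l : E) : Prop :=
  ∃ p : ℕ → E, StatDecrZero p ∧ NatDensity {n | ¬ |x n - l| ≤ p n} 0

/-- `x` statistically unbounded order converges to `l`. -/
def StatUOConv (x : ℕ → E) (l : E) : Prop :=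
  ∀ u : E, 0 ≤ u → StatOrderConv (fun n => |x n - l| ⊓ u) 0

/-- a (nonnegative) sequence order converges to `0`: it is dominated by a sequence
decreasing to `0`. -/
def OrderConvZero (q : ℕ → E) : Prop :=
  ∃ p : ℕ → E, Antitone p ∧ IsGLB (Set.range p) 0 ∧ ∀ n, q n ≤ p n

/-- `x` is unbounded order convergent to `l`. -/
def UOConv (x : ℕ → E) (l : E) : Prop :=
  ∀ u : E, 0 ≤ u → OrderConvZero (fun n => |x n - l| ⊓ u)

/- ### Counting auxiliary lemmas -/

private lemma div_nat_mono {a b : ℝ} (n : ℕ) (h : a ≤ b) : a / (n : ℝ) ≤ b / n :=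
  div_le_div_of_nonneg_right h (Nat.cast_nonneg n)

private lemma fcard_mono (P Q : ℕ → Prop) [DecidablePred P] [DecidablePred Q] (n : ℕ)
    (h : ∀ k, P k → Q k) :
    ((Finset.range n).filter P).card ≤ ((Finset.range n).filter Q).card :=
  Finset.card_le_card (fun k hk => by
    simp only [Finset.mem_filter] at hk ⊢
    exact ⟨hk.1, h k hk.2⟩)

private lemma fcard_union_le (P Q R : ℕ → Prop) [DecidablePred P] [DecidablePred Q]
    [DecidablePred R] (n : ℕ) (h : ∀ k, R k → P k ∨ Q k) :
    ((Finset.range n).filter R).card ≤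
      ((Finset.range n).filter P).card + ((Finset.range n).filter Q).card := by
  have hsub : (Finset.range n).filter R ⊆
      (Finset.range n).filter P ∪ (Finset.range n).filter Q := by
    intro k hk
    simp only [Finset.mem_filter, Finset.mem_union] at hk ⊢
    rcases h k hk.2 with h' | h'
    · exact Or.inl ⟨hk.1, h'⟩
    · exact Or.inr ⟨hk.1, h'⟩
  exact (Finset.card_le_card hsub).trans (Finset.card_union_le _ _)

private lemma fcard_inter_ge (P Q R : ℕ → Prop) [DecidablePred P] [DecidablePred Q]
    [DecidablePred R] (n : ℕ) (h : ∀ k, P k → Q k → R k) :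
    ((Finset.range n).filter P).card + ((Finset.range n).filter Q).card ≤
      ((Finset.range n).filter R).card + n := by
  have h3 := Finset.card_union_add_card_inter
    ((Finset.range n).filter P) ((Finset.range n).filter Q)
  have h4 : ((Finset.range n).filter P ∪ (Finset.range n).filter Q).card ≤ n := by
    have := Finset.card_le_card (Finset.union_subset
      (Finset.filter_subset P (Finset.range n)) (Finset.filter_subset Q (Finset.range n)))
    simpa using this
  have h5 : ((Finset.range n).filter P ∩ (Finset.range n).filter Q).card ≤
      ((Finset.range n).filter R).card := by
    refine Finset.card_le_card (fun k hk => ?_)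
    simp only [Finset.mem_inter, Finset.mem_filter] at hk ⊢
    exact ⟨hk.1.1, h k hk.1.2 hk.2.2⟩
  omega

private lemma natDensity_zero_subset {A B : Set ℕ} (h : A ⊆ B) (hB : NatDensity B 0) :
    NatDensity A 0 := by
  refine squeeze_zero (fun n => by positivity) (fun n => ?_) hB
  exact div_nat_mono n (by exact_mod_cast fcard_mono _ _ n (fun k hk => h hk))

private lemma natDensity_zero_union {A B : Set ℕ} (hA : NatDensity A 0) (hB : NatDensity B 0) :
    NatDensity (A ∪ B) 0 := by
  have h : Filter.Tendsto (fun n =>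
      (((Finset.range n).filter (fun k => k ∈ A)).card : ℝ) / n +
      (((Finset.range n).filter (fun k => k ∈ B)).card : ℝ) / n)
      Filter.atTop (nhds 0) := by
    simpa using hA.add hB
  refine squeeze_zero (fun n => by positivity) (fun n => ?_) h
  rw [← add_div]
  exact div_nat_mono n (by
    exact_mod_cast @fcard_union_le (fun k => k ∈ A) (fun k => k ∈ B) (fun k => k ∈ A ∪ B)
      (fun a => Classical.propDecidable _) (fun a => Classical.propDecidable _)
      (fun a => Classical.propDecidable _) n (fun k hk => hk))

private lemma natDensity_one_inter {A B : Set ℕ} (hA : NatDensity A 1) (hB : NatDensity B 1) :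
    NatDensity (A ∩ B) 1 := by
  have hlow : Filter.Tendsto (fun n =>
      (((Finset.range n).filter (fun k => k ∈ A)).card : ℝ) / n +
      (((Finset.range n).filter (fun k => k ∈ B)).card : ℝ) / n - 1)
      Filter.atTop (nhds 1) := by
    have := (hA.add hB).sub (tendsto_const_nhds (x := (1:ℝ)))
    norm_num at this
    exact this
  refine tendsto_of_tendsto_of_tendsto_of_le_of_le hlow hA (fun n => ?_) (fun n => ?_)
  · rcases Nat.eq_zero_or_pos n with h0 | h0
    · simp [h0]
    · have hn : (0:ℝ) < n := by exact_mod_cast h0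
      have key : (((Finset.range n).filter (fun k => k ∈ A)).card : ℝ) +
          (((Finset.range n).filter (fun k => k ∈ B)).card : ℝ) ≤
          (((@Finset.filter ℕ (fun k => k ∈ A ∩ B)
            (fun a => Classical.propDecidable _) (Finset.range n)).card : ℝ)) + n := by
        exact_mod_cast @fcard_inter_ge (fun k => k ∈ A) (fun k => k ∈ B) (fun k => k ∈ A ∩ B)
          (fun a => Classical.propDecidable _) (fun a => Classical.propDecidable _)
          (fun a => Classical.propDecidable _) n (fun k h1 h2 => ⟨h1, h2⟩)
      have h6 := div_nat_mono n key
      rw [add_div, add_div, div_self (ne_of_gt hn)] at h6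
      linarith
  · exact div_nat_mono n (by
      exact_mod_cast @fcard_mono (fun k => k ∈ A ∩ B) (fun k => k ∈ A)
        (fun a => Classical.propDecidable _) (fun a => Classical.propDecidable _)
        n (fun k hk => hk.1))

private lemma natDensity_one_unbounded {K : Set ℕ} (hK : NatDensity K 1) :
    ∀ N : ℕ, ∃ k ∈ K, N ≤ k := by
  intro N
  by_contra h
  push_neg at h
  have hzero : NatDensity K 0 := by
    refine squeeze_zero (fun n => by positivity) (fun n => ?_)
      (tendsto_const_div_atTop_nhds_zero_nat (N : ℝ))
    refine div_nat_mono n ?_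
    have hc : ((Finset.range n).filter (fun k => k ∈ K)).card ≤ N := by
      have hsub : (Finset.range n).filter (fun k => k ∈ K) ⊆ Finset.range N := by
        intro k hk
        simp only [Finset.mem_filter] at hk
        exact Finset.mem_range.2 (h k hk.2)
      simpa using Finset.card_le_card hsub
    exact_mod_cast hc
  exact one_ne_zero (tendsto_nhds_unique hK hzero)

/- ### Riesz space auxiliary lemmas -/

omit [Module ℝ E] [PosSMulMono ℝ E] in
private lemma inf_add_ineq {a b u : E} (ha : 0 ≤ a) (hb : 0 ≤ b) (hu : 0 ≤ u) :
    (a + b) ⊓ u ≤ a ⊓ u + b ⊓ u := by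
  have e1 : a ⊓ u + b ⊓ u = ((a + b) ⊓ (u + b)) ⊓ ((a + u) ⊓ (u + u)) := by
    rw [add_inf, inf_add, inf_add]
  rw [e1]
  refine le_inf (le_inf inf_le_left ?_) (le_inf ?_ ?_)
  · exact inf_le_right.trans (le_add_of_nonneg_right hb)
  · exact inf_le_right.trans (le_add_of_nonneg_left ha)
  · exact inf_le_right.trans (le_add_of_nonneg_left hu)

omit [Module ℝ E] [PosSMulMono ℝ E] in
private lemma glb_add {p₁ p₂ : ℕ → E} {K₁ K₂ : Set ℕ}
    (hm₁ : ∀ j ∈ K₁, ∀ k ∈ K₁, j ≤ k → p₁ k ≤ p₁ j)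
    (hm₂ : ∀ j ∈ K₂, ∀ k ∈ K₂, j ≤ k → p₂ k ≤ p₂ j)
    (hg₁ : IsGLB (p₁ '' K₁) 0) (hg₂ : IsGLB (p₂ '' K₂) 0)
    (hub : ∀ N : ℕ, ∃ k ∈ K₁ ∩ K₂, N ≤ k) :
    IsGLB ((fun n => p₁ n + p₂ n) '' (K₁ ∩ K₂)) 0 := by
  constructor
  · rintro v ⟨k, hk, rfl⟩
    exact add_nonneg (hg₁.1 ⟨k, hk.1, rfl⟩) (hg₂.1 ⟨k, hk.2, rfl⟩)
  · intro b hb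
    have step2 : ∀ j ∈ K₁ ∩ K₂, b ≤ p₂ j := by
      intro j hj
      have step1 : ∀ k ∈ K₁, b - p₂ j ≤ p₁ k := by
        intro k hk
        obtain ⟨m, hm, hmk⟩ := hub (max k j)
        have hbm : b ≤ p₁ m + p₂ m := hb ⟨m, hm, rfl⟩
        have hmk1 : p₁ m ≤ p₁ k := hm₁ k hk m hm.1 ((le_max_left _ _).trans hmk)
        have hmk2 : p₂ m ≤ p₂ j := hm₂ j hj.2 m hm.2 ((le_max_right _ _).trans hmk)
        rw [sub_le_iff_le_add]
        calc b ≤ p₁ m + p₂ m := hbm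
        _ ≤ p₁ k + p₂ j := add_le_add hmk1 hmk2
      have hsub : b - p₂ j ≤ 0 := hg₁.2 (by rintro v ⟨k, hk, rfl⟩; exact step1 k hk)
      exact sub_nonpos.mp hsub
    have step3 : ∀ j ∈ K₂, b ≤ p₂ j := by
      intro j hj
      obtain ⟨m, hm, hmj⟩ := hub j
      exact (step2 m hm).trans (hm₂ j hj m hm.2 hmj)
    exact hg₂.2 (by rintro v ⟨k, hk, rfl⟩; exact step3 k hk)

/-- Squeeze law for statistical uo-convergence. -/
theorem stuo_squeeze (x y z : ℕ → E) (l : E)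
    (h₁ : ∀ n, x n ≤ y n) (h₂ : ∀ n, y n ≤ z n)
    (hx : StatUOConv x l) (hz : StatUOConv z l) :
    StatUOConv y l := by
  intro u hu
  obtain ⟨p₁, ⟨K₁, hK₁, hm₁, hg₁⟩, hd₁⟩ := hx u hu
  obtain ⟨p₂, ⟨K₂, hK₂, hm₂, hg₂⟩, hd₂⟩ := hz u hu
  refine ⟨fun n => p₁ n + p₂ n, ⟨K₁ ∩ K₂, natDensity_one_inter hK₁ hK₂, ?_, ?_⟩, ?_⟩
  · intro j hj k hk hjk
    exact add_le_add (hm₁ j hj.1 k hk.1 hjk) (hm₂ j hj.2 k hk.2 hjk)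
  · exact glb_add hm₁ hm₂ hg₁ hg₂ (natDensity_one_unbounded (natDensity_one_inter hK₁ hK₂))
  · refine natDensity_zero_subset ?_ (natDensity_zero_union hd₁ hd₂)
    intro n hn
    have eabs : ∀ w : ℕ → E, ∀ m : ℕ, |( |w m - l| ⊓ u ) - 0| = |w m - l| ⊓ u := by
      intro w m
      rw [sub_zero, abs_of_nonneg (le_inf (abs_nonneg _) hu)]
    simp only [Set.mem_setOf_eq, Set.mem_union, eabs] at hn ⊢
    by_contra hc
    push_neg at hc
    obtain ⟨hc₁, hc₂⟩ := hc
    apply hn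
    have hy : |y n - l| ≤ |x n - l| + |z n - l| := by
      have hle1 : y n - l ≤ |x n - l| + |z n - l| :=
        ((sub_le_sub_right (h₂ n) l).trans (le_abs_self _)).trans
          (le_add_of_nonneg_left (abs_nonneg _))
      have hle2 : -(y n - l) ≤ |x n - l| + |z n - l| := by
        have ha : -(y n - l) ≤ -(x n - l) := neg_le_neg_iff.mpr (sub_le_sub_right (h₁ n) l)
        have hb : -(x n - l) ≤ |x n - l| := le_sup_right
        exact (ha.trans hb).trans (le_add_of_nonneg_right (abs_nonneg _))
      exact abs_le'.mpr ⟨hle1, hle2⟩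
    calc |y n - l| ⊓ u ≤ (|x n - l| + |z n - l|) ⊓ u := inf_le_inf_right u hy
    _ ≤ |x n - l| ⊓ u + |z n - l| ⊓ u := inf_add_ineq (abs_nonneg _) (abs_nonneg _) hu
    _ ≤ p₁ n + p₂ n := add_le_add hc₁ hc₂
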